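/- arXiv:2308.02609 — 6 statements merged into one kernel-verified Lean document; each statement's English description precedes it below -/
import Mathlib

section
/- Let f : ℝ²₊ → ℝ₊ be differentiable and let a, b, c be real numbers such that f(L·e^{b t}, K·e^{a t}) = e^{c t}·f(L, K) for all t ∈ ℝ and all L, K > 0. Then the labor share and capital share are invariant along the orbits: for all t ∈ ℝ and L, K > 0, (∂f/∂L)(L e^{b t}, K e^{a t})·(L e^{b t})/f(L e^{b t}, K e^{a t}) = (∂f/∂L)(L, K)·L/f(L, K), and (∂f/∂K)(L e^{b t}, K e^{a t})·(K e^{a t})/f(L e^{b t}, K e^{a t}) = (∂f/∂K)(L, K)·K/f(L, K). Hence exponential growth in labor, capital, and production implies Bowley's law, without assuming any specific form of the production function. -/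
open Real

/-- If a positive differentiable production function `f(L, K)` is equivariant,
`f(L·e^{bt}, K·e^{at}) = e^{ct}·f(L, K)`, then the labor share
`(∂f/∂L)·L/f` and the capital share `(∂f/∂K)·K/f` are invariant along the
orbits: exponential growth implies Bowley's law. -/
theorem stmt_8 (f : ℝ × ℝ → ℝ) (a b c : ℝ)
    (hdiff : Differentiable ℝ f)
    (hpos : ∀ L K : ℝ, 0 < L → 0 < K → 0 < f (L, K))
    (hequiv : ∀ t L K : ℝ, 0 < L → 0 < K →
      f (L * exp (b * t), K * exp (a * t)) = exp (c * t) * f (L, K)) :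
    ∀ t L K : ℝ, 0 < L → 0 < K →
      (fderiv ℝ f (L * exp (b * t), K * exp (a * t)) (1, 0) * (L * exp (b * t))
          / f (L * exp (b * t), K * exp (a * t))
        = fderiv ℝ f (L, K) (1, 0) * L / f (L, K)) ∧
      (fderiv ℝ f (L * exp (b * t), K * exp (a * t)) (0, 1) * (K * exp (a * t))
          / f (L * exp (b * t), K * exp (a * t))
        = fderiv ℝ f (L, K) (0, 1) * K / f (L, K)) := by
  intro t L K hL hK
  have hEpos : 0 < exp (b * t) := exp_pos _
  have hApos : 0 < exp (a * t) := exp_pos _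
  have hCpos : 0 < exp (c * t) := exp_pos _
  set E := exp (b * t)
  set A := exp (a * t)
  set C := exp (c * t)
  have hfpos : 0 < f (L, K) := hpos _ _ hL hK
  have hppos : 0 < f (L * E, K * A) := hpos _ _ (by positivity) (by positivity)
  have key1 : fderiv ℝ f (L * E, K * A) (E, 0)
      = C * fderiv ℝ f (L, K) (1, 0) := by
    have hg : HasDerivAt (fun x : ℝ => (x * E, K * A)) (E, (0 : ℝ)) L :=
      by simpa using HasDerivAt.prodMk ((hasDerivAt_id L).mul_const E) (hasDerivAt_const L (K * A))
    have h1 : HasDerivAt (fun x : ℝ => f (x * E, K * A))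
        (fderiv ℝ f (L * E, K * A) (E, 0)) L :=
      (hdiff (L * E, K * A)).hasFDerivAt.comp_hasDerivAt L hg
    have hg2 : HasDerivAt (fun x : ℝ => (x, K)) ((1 : ℝ), (0 : ℝ)) L :=
      HasDerivAt.prodMk (hasDerivAt_id L) (hasDerivAt_const L K)
    have h2 : HasDerivAt (fun x : ℝ => C * f (x, K))
        (C * fderiv ℝ f (L, K) (1, 0)) L :=
      ((hdiff (L, K)).hasFDerivAt.comp_hasDerivAt L hg2).const_mul C
    have heq : (fun x : ℝ => f (x * E, K * A)) =ᶠ[nhds L]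
        (fun x : ℝ => C * f (x, K)) := by
      filter_upwards [eventually_gt_nhds hL] with x hx
      exact hequiv t x K hx hK
    exact h1.unique (h2.congr_of_eventuallyEq heq)
  have key2 : fderiv ℝ f (L * E, K * A) (0, A)
      = C * fderiv ℝ f (L, K) (0, 1) := by
    have hg : HasDerivAt (fun x : ℝ => (L * E, x * A)) ((0 : ℝ), A) K :=
      by simpa using HasDerivAt.prodMk (hasDerivAt_const K (L * E)) ((hasDerivAt_id K).mul_const A)
    have h1 : HasDerivAt (fun x : ℝ => f (L * E, x * A))
        (fderiv ℝ f (L * E, K * A) (0, A)) K :=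
      (hdiff (L * E, K * A)).hasFDerivAt.comp_hasDerivAt K hg
    have hg2 : HasDerivAt (fun x : ℝ => (L, x)) ((0 : ℝ), (1 : ℝ)) K :=
      HasDerivAt.prodMk (hasDerivAt_const K L) (hasDerivAt_id K)
    have h2 : HasDerivAt (fun x : ℝ => C * f (L, x))
        (C * fderiv ℝ f (L, K) (0, 1)) K :=
      ((hdiff (L, K)).hasFDerivAt.comp_hasDerivAt K hg2).const_mul C
    have heq : (fun x : ℝ => f (L * E, x * A)) =ᶠ[nhds K]
        (fun x : ℝ => C * f (L, x)) := by
      filter_upwards [eventually_gt_nhds hK] with x hx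
      exact hequiv t L x hL hx
    exact h1.unique (h2.congr_of_eventuallyEq heq)
  have hsm1 : ((E : ℝ), (0 : ℝ)) = E • ((1 : ℝ), (0 : ℝ)) := by simp
  have hsm2 : ((0 : ℝ), (A : ℝ)) = A • ((0 : ℝ), (1 : ℝ)) := by simp
  rw [hsm1, map_smul, smul_eq_mul] at key1
  rw [hsm2, map_smul, smul_eq_mul] at key2
  have hfe : f (L * E, K * A) = C * f (L, K) := hequiv t L K hL hK
  constructor
  · have hD : fderiv ℝ f (L * E, K * A) (1, 0)
        = C * fderiv ℝ f (L, K) (1, 0) / E := by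
      field_simp at key1 ⊢; linarith
    rw [hD, hfe]
    field_simp
  · have hD : fderiv ℝ f (L * E, K * A) (0, 1)
        = C * fderiv ℝ f (L, K) (0, 1) / A := by
      field_simp at key2 ⊢; linarith
    rw [hD, hfe]
    field_simp
end

section
/- Let n ≥ 1, and for i = 1, …, n let b_i > 0, N_i > 0, x_i⁰ ∈ (0, N_i), and a_i ∈ ℝ, and let x_i(t) = N_i·x_i⁰/(x_i⁰ + (N_i − x_i⁰)e^{−b_i t}) be the logistic trajectories. Then for all t ∈ ℝ, ∏_{i=1}^n [x_i(t)·(N_i − x_i⁰)/(x_i⁰·(N_i − x_i(t)))]^{a_i} = e^{(∑_{i=1}^n a_i b_i)·t}. Consequently, the function t ↦ ∏_{i=1}^n [x_i(t)·(N_i − x_i⁰)/(x_i⁰·(N_i − x_i(t)))]^{a_i} is constant if and only if the orthogonality condition ∑_{i=1}^n a_i·b_i = 0 holds. -/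
open Real Finset

/-- Along logistic trajectories `xᵢ(t) = Nᵢxᵢ⁰/(xᵢ⁰ + (Nᵢ − xᵢ⁰)e^{−bᵢt})` one has
`∏ i, [xᵢ(t)(Nᵢ − xᵢ⁰)/(xᵢ⁰(Nᵢ − xᵢ(t)))]^{aᵢ} = e^{(∑ i, aᵢbᵢ)t}`; hence this
product is constant in `t` iff the orthogonality condition `∑ i, aᵢbᵢ = 0` holds. -/
theorem stmt_12 (n : ℕ) (hn : 1 ≤ n) (b N x0 a : Fin n → ℝ)
    (hb : ∀ i, 0 < b i) (hN : ∀ i, 0 < N i) (hx0 : ∀ i, x0 i ∈ Set.Ioo 0 (N i))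
    (x : Fin n → ℝ → ℝ)
    (hx : ∀ i, x i = fun t : ℝ => N i * x0 i / (x0 i + (N i - x0 i) * exp (-b i * t))) :
    (∀ t : ℝ, ∏ i, (x i t * (N i - x0 i) / (x0 i * (N i - x i t))) ^ a i
        = exp ((∑ i, a i * b i) * t)) ∧
    ((∀ t s : ℝ, ∏ i, (x i t * (N i - x0 i) / (x0 i * (N i - x i t))) ^ a i
        = ∏ i, (x i s * (N i - x0 i) / (x0 i * (N i - x i s))) ^ a i)
      ↔ ∑ i, a i * b i = 0) := by
  have key : ∀ (i : Fin n) (t : ℝ),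
      x i t * (N i - x0 i) / (x0 i * (N i - x i t)) = exp (b i * t) := by
    intro i t
    have hx0p := (hx0 i).1
    have hxN : x0 i < N i := (hx0 i).2
    have hNp := hN i
    rw [hx]
    simp only
    set E := exp (-b i * t) with hE
    set F := exp (b i * t) with hF
    have he : E * F = 1 := by rw [hE, hF, ← exp_add]; ring_nf; exact exp_zero
    have hep : 0 < E := exp_pos _
    have hd : 0 < x0 i + (N i - x0 i) * E :=
      add_pos hx0p (mul_pos (by linarith) hep)
    set d := x0 i + (N i - x0 i) * E with hdd
    have h1 : N i - N i * x0 i / d = N i * (N i - x0 i) * E / d := by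
      rw [eq_div_iff hd.ne', sub_mul, div_mul_cancel₀ _ hd.ne', hdd]; ring
    rw [h1]
    have h2 : x0 i * (N i * (N i - x0 i) * E / d) ≠ 0 :=
      (mul_pos hx0p (div_pos (mul_pos (mul_pos hNp (by linarith)) hep) hd)).ne'
    rw [div_eq_iff h2]
    field_simp
    linear_combination (x0 i - N i) * he
  have main : ∀ t : ℝ, ∏ i, (x i t * (N i - x0 i) / (x0 i * (N i - x i t))) ^ a i
      = exp ((∑ i, a i * b i) * t) := by
    intro t
    have h : ∀ i ∈ Finset.univ (α := Fin n),
        (x i t * (N i - x0 i) / (x0 i * (N i - x i t))) ^ a i = exp (a i * b i * t) := by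
      intro i _
      rw [key i t, ← Real.exp_mul]
      ring_nf
    rw [Finset.prod_congr rfl h, ← Real.exp_sum, Finset.sum_mul]
  refine ⟨main, ?_, ?_⟩
  · intro h
    have h1 := h 1 0
    rw [main 1, main 0, mul_one, mul_zero, exp_zero] at h1
    exact Real.exp_injective (by rw [h1, exp_zero])
  · intro h t s
    rw [main t, main s, h, zero_mul, zero_mul]
end

section
/- Let A > 0, α > 0, β > 0, and fix L > 0 and K > 0. For N_L > L, N_K > K, N_Y > 0, define F(N_L, N_K, N_Y) = N_Y·L^α·K^β / ( (N_Y/(A·N_L^α·N_K^β))·(N_L − L)^α·(N_K − K)^β + L^α·K^β ). Then F(N_L, N_K, N_Y) → A·L^α·K^β as N_L, N_K, N_Y → ∞. That is, the Cobb–Douglas production function is the pointwise limiting case of the logistic production function as the carrying capacities tend to infinity. -/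
open Real Filter

/-- The Cobb–Douglas function is the pointwise limit of the logistic production
function as the carrying capacities tend to infinity: with
`C = N_Y/(A·N_L^α·N_K^β)`,
`F(N_L, N_K, N_Y) = N_Y·L^α·K^β/(C·(N_L − L)^α·(N_K − K)^β + L^α·K^β) → A·L^α·K^β`
as `N_L, N_K, N_Y → ∞`. -/
theorem stmt_15 (A α β L K : ℝ) (hA : 0 < A) (hα : 0 < α) (hβ : 0 < β)
    (hL : 0 < L) (hK : 0 < K) :
    Tendsto
      (fun p : ℝ × ℝ × ℝ =>
        p.2.2 * L ^ α * K ^ β /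
          ((p.2.2 / (A * p.1 ^ α * p.2.1 ^ β)) * (p.1 - L) ^ α * (p.2.1 - K) ^ β
            + L ^ α * K ^ β))
      (atTop ×ˢ atTop ×ˢ atTop) (nhds (A * L ^ α * K ^ β)) := by
  have hX : (0:ℝ) < L ^ α * K ^ β :=
    mul_pos (Real.rpow_pos_of_pos hL α) (Real.rpow_pos_of_pos hK β)
  -- the nicer form
  have hfst : Tendsto (fun p : ℝ × ℝ × ℝ => p.1) (atTop ×ˢ atTop ×ˢ atTop) atTop :=
    tendsto_fst
  have hsnd1 : Tendsto (fun p : ℝ × ℝ × ℝ => p.2.1) (atTop ×ˢ atTop ×ˢ atTop) atTop :=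
    tendsto_fst.comp tendsto_snd
  have hsnd2 : Tendsto (fun p : ℝ × ℝ × ℝ => p.2.2) (atTop ×ˢ atTop ×ˢ atTop) atTop :=
    tendsto_snd.comp tendsto_snd
  have h1 : Tendsto (fun p : ℝ × ℝ × ℝ => (1 - L / p.1) ^ α)
      (atTop ×ˢ atTop ×ˢ atTop) (nhds 1) := by
    have h0 : Tendsto (fun p : ℝ × ℝ × ℝ => 1 - L / p.1)
        (atTop ×ˢ atTop ×ˢ atTop) (nhds 1) := by
      have := Tendsto.div_atTop (tendsto_const_nhds (x := L)) hfst
      simpa using tendsto_const_nhds.sub this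
    have hc := (Real.continuousAt_rpow_const 1 α (Or.inl one_ne_zero)).tendsto.comp h0
    simpa [Function.comp_def] using hc
  have h2 : Tendsto (fun p : ℝ × ℝ × ℝ => (1 - K / p.2.1) ^ β)
      (atTop ×ˢ atTop ×ˢ atTop) (nhds 1) := by
    have h0 : Tendsto (fun p : ℝ × ℝ × ℝ => 1 - K / p.2.1)
        (atTop ×ˢ atTop ×ˢ atTop) (nhds 1) := by
      have := Tendsto.div_atTop (tendsto_const_nhds (x := K)) hsnd1
      simpa using tendsto_const_nhds.sub this
    have hc := (Real.continuousAt_rpow_const 1 β (Or.inl one_ne_zero)).tendsto.comp h0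
    simpa [Function.comp_def] using hc
  have h3 : Tendsto (fun p : ℝ × ℝ × ℝ => L ^ α * K ^ β / p.2.2)
      (atTop ×ˢ atTop ×ˢ atTop) (nhds 0) :=
    Tendsto.div_atTop tendsto_const_nhds hsnd2
  have hden : Tendsto (fun p : ℝ × ℝ × ℝ =>
      (1 - L / p.1) ^ α * (1 - K / p.2.1) ^ β / A + L ^ α * K ^ β / p.2.2)
      (atTop ×ˢ atTop ×ˢ atTop) (nhds (1 / A)) := by
    have := ((h1.mul h2).div_const A).add h3
    simpa using this
  have hnice : Tendsto (fun p : ℝ × ℝ × ℝ =>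
      L ^ α * K ^ β / ((1 - L / p.1) ^ α * (1 - K / p.2.1) ^ β / A + L ^ α * K ^ β / p.2.2))
      (atTop ×ˢ atTop ×ˢ atTop) (nhds (A * L ^ α * K ^ β)) := by
    have := (tendsto_const_nhds (x := L ^ α * K ^ β)).div hden (by positivity : (1:ℝ)/A ≠ 0)
    have heq : L ^ α * K ^ β / (1 / A) = A * L ^ α * K ^ β := by
      field_simp
    rwa [heq] at this
  refine hnice.congr' ?_
  have hev : ∀ᶠ p : ℝ × ℝ × ℝ in atTop ×ˢ atTop ×ˢ atTop,
      L < p.1 ∧ K < p.2.1 ∧ 0 < p.2.2 :=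
    (eventually_gt_atTop L).prod_mk ((eventually_gt_atTop K).prod_mk (eventually_gt_atTop 0))
  filter_upwards [hev] with p hp
  obtain ⟨ha, hb, hc⟩ := hp
  have ha0 : 0 < p.1 := hL.trans ha
  have hb0 : 0 < p.2.1 := hK.trans hb
  have haα : (0:ℝ) < p.1 ^ α := Real.rpow_pos_of_pos ha0 α
  have hbβ : (0:ℝ) < p.2.1 ^ β := Real.rpow_pos_of_pos hb0 β
  have e1 : (1 - L / p.1) ^ α = (p.1 - L) ^ α / p.1 ^ α := by
    rw [show 1 - L / p.1 = (p.1 - L) / p.1 by field_simp, Real.div_rpow (by linarith) ha0.le]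
  have e2 : (1 - K / p.2.1) ^ β = (p.2.1 - K) ^ β / p.2.1 ^ β := by
    rw [show 1 - K / p.2.1 = (p.2.1 - K) / p.2.1 by field_simp,
      Real.div_rpow (by linarith) hb0.le]
  rw [e1, e2]
  have t1 : (0:ℝ) < (p.1 - L) ^ α := Real.rpow_pos_of_pos (by linarith) α
  have t2 : (0:ℝ) < (p.2.1 - K) ^ β := Real.rpow_pos_of_pos (by linarith) β
  have hdpos : 0 < (p.1 - L) ^ α / p.1 ^ α * ((p.2.1 - K) ^ β / p.2.1 ^ β) / A
      + L ^ α * K ^ β / p.2.2 :=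
    add_pos (div_pos (mul_pos (div_pos t1 haα) (div_pos t2 hbβ)) hA) (div_pos hX hc)
  field_simp
end

section
/- Let α, β be real numbers, C > 0, N_Y > 0, N_L > 0, N_K > 0, and for 0 < L < N_L and 0 < K < N_K define Y(L, K) = N_Y·L^α·K^β / (C·(N_L − L)^α·(N_K − K)^β + L^α·K^β). Then the labor share satisfies (∂Y/∂L)(L, K)·L/Y(L, K) = α·(N_L/(N_L − L))·( C·(N_L − L)^α·(N_K − K)^β / (C·(N_L − L)^α·(N_K − K)^β + L^α·K^β) ). -/
open Real

/-- The labor share of the logistic production function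
`Y(L, K) = N_Y·L^α·K^β/(C·(N_L − L)^α·(N_K − K)^β + L^α·K^β)` is
`s_L = α·(N_L/(N_L − L))·C·(N_L − L)^α·(N_K − K)^β/(C·(N_L − L)^α·(N_K − K)^β + L^α·K^β)`. -/
theorem stmt_16 (α β C NY NL NK L K : ℝ) (hC : 0 < C) (hNY : 0 < NY)
    (hNL : 0 < NL) (hNK : 0 < NK) (hL : 0 < L) (hLN : L < NL)
    (hK : 0 < K) (hKN : K < NK) :
    deriv (fun l : ℝ =>
        NY * l ^ α * K ^ β / (C * (NL - l) ^ α * (NK - K) ^ β + l ^ α * K ^ β)) L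
      * L / (NY * L ^ α * K ^ β / (C * (NL - L) ^ α * (NK - K) ^ β + L ^ α * K ^ β))
    = α * (NL / (NL - L)) *
        (C * (NL - L) ^ α * (NK - K) ^ β /
          (C * (NL - L) ^ α * (NK - K) ^ β + L ^ α * K ^ β)) := by
  have hNLL : (0:ℝ) < NL - L := by linarith
  have hNKK : (0:ℝ) < NK - K := by linarith
  have h1 : HasDerivAt (fun l : ℝ => l ^ α) (α * L ^ (α - 1)) L :=
    Real.hasDerivAt_rpow_const (Or.inl hL.ne')
  have h2 : HasDerivAt (fun l : ℝ => (NL - l) ^ α)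
      (α * (NL - L) ^ (α - 1) * (-1)) L := by
    have hin : HasDerivAt (fun l : ℝ => NL - l) (-1) L := (hasDerivAt_id L).const_sub NL
    exact (Real.hasDerivAt_rpow_const (p := α) (Or.inl hNLL.ne')).comp L hin
  have hf : HasDerivAt (fun l : ℝ => NY * l ^ α * K ^ β)
      (NY * (α * L ^ (α - 1)) * K ^ β) L := (h1.const_mul NY).mul_const _
  have hg : HasDerivAt (fun l : ℝ => C * (NL - l) ^ α * (NK - K) ^ β + l ^ α * K ^ β)
      (C * (α * (NL - L) ^ (α - 1) * (-1)) * (NK - K) ^ β + α * L ^ (α - 1) * K ^ β)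
      L := ((h2.const_mul C).mul_const _).add (h1.mul_const _)
  have hApos : (0:ℝ) < C * (NL - L) ^ α * (NK - K) ^ β := by positivity
  have hBpos : (0:ℝ) < L ^ α * K ^ β := by positivity
  have hg0 : C * (NL - L) ^ α * (NK - K) ^ β + L ^ α * K ^ β ≠ 0 := by positivity
  have hd := (hf.div hg hg0).deriv
  rw [show (fun l : ℝ => NY * l ^ α * K ^ β / (C * (NL - l) ^ α * (NK - K) ^ β + l ^ α * K ^ β)) = (fun l : ℝ => NY * l ^ α * K ^ β) / (fun l : ℝ => C * (NL - l) ^ α * (NK - K) ^ β + l ^ α * K ^ β) from rfl, hd]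
  have e1 : L ^ (α - 1) = L ^ α / L := by
    rw [Real.rpow_sub hL, Real.rpow_one]
  have e2 : (NL - L) ^ (α - 1) = (NL - L) ^ α / (NL - L) := by
    rw [Real.rpow_sub hNLL, Real.rpow_one]
  rw [e1, e2]
  have hLa : (0:ℝ) < L ^ α := Real.rpow_pos_of_pos hL α
  have hNLa : (0:ℝ) < (NL - L) ^ α := Real.rpow_pos_of_pos hNLL α
  have hKb : (0:ℝ) < K ^ β := Real.rpow_pos_of_pos hK β
  have hNKb : (0:ℝ) < (NK - K) ^ β := Real.rpow_pos_of_pos hNKK β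
  field_simp
  ring
end

section
/- Let α, β > 0, C > 0, and fix L > 0 and K > 0. For N_L > L and N_K > K define s_L(N_L, N_K) = α·(N_L/(N_L − L))·( C·(N_L − L)^α·(N_K − K)^β / (C·(N_L − L)^α·(N_K − K)^β + L^α·K^β) ). Then s_L(N_L, N_K) → α as N_L, N_K → ∞. That is, the labor share of the logistic production function converges to the constant labor share α of the Cobb–Douglas model as the carrying capacities tend to infinity. -/
open Real Filter

lemma aux_div_add (a : ℝ) : Tendsto (fun t : ℝ => t / (t + a)) atTop (nhds 1) := by
  have hd : Tendsto (fun t : ℝ => t + a) atTop atTop :=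
    tendsto_atTop_add_const_right _ a tendsto_id
  have h0 : Tendsto (fun t : ℝ => a / (t + a)) atTop (nhds 0) :=
    tendsto_const_nhds.div_atTop hd
  have h1 : Tendsto (fun t : ℝ => 1 - a / (t + a)) atTop (nhds 1) := by
    simpa using tendsto_const_nhds.sub h0
  refine h1.congr' ?_
  filter_upwards [hd.eventually_gt_atTop 0] with t ht
  have hne : t + a ≠ 0 := ne_of_gt ht
  field_simp
  ring

/-- The labor share of the logistic production function,
`s_L(N_L, N_K) = α·(N_L/(N_L − L))·C·(N_L − L)^α·(N_K − K)^β/(C·(N_L − L)^α·(N_K − K)^β + L^α·K^β)`,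
converges to the constant Cobb–Douglas labor share `α` as the carrying
capacities `N_L, N_K` tend to infinity. -/
theorem stmt_17 (α β C L K : ℝ) (hα : 0 < α) (hβ : 0 < β) (hC : 0 < C)
    (hL : 0 < L) (hK : 0 < K) :
    Tendsto
      (fun p : ℝ × ℝ =>
        α * (p.1 / (p.1 - L)) *
          (C * (p.1 - L) ^ α * (p.2 - K) ^ β /
            (C * (p.1 - L) ^ α * (p.2 - K) ^ β + L ^ α * K ^ β)))
      (atTop ×ˢ atTop) (nhds α) := by
  have hfst : Tendsto (fun p : ℝ × ℝ => p.1) (atTop ×ˢ atTop) atTop := tendsto_fst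
  have hsnd : Tendsto (fun p : ℝ × ℝ => p.2) (atTop ×ˢ atTop) atTop := tendsto_snd
  have hfrac : Tendsto (fun p : ℝ × ℝ => p.1 / (p.1 - L)) (atTop ×ˢ atTop) (nhds 1) := by
    have := (aux_div_add (-L)).comp hfst
    simpa [sub_eq_add_neg, Function.comp_def] using this
  have hA : Tendsto (fun p : ℝ × ℝ => (p.1 - L) ^ α) (atTop ×ˢ atTop) atTop := by
    refine (tendsto_rpow_atTop hα).comp ?_
    simpa [sub_eq_add_neg] using tendsto_atTop_add_const_right _ (-L) hfst
  have hB : Tendsto (fun p : ℝ × ℝ => (p.2 - K) ^ β) (atTop ×ˢ atTop) atTop := by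
    refine (tendsto_rpow_atTop hβ).comp ?_
    simpa [sub_eq_add_neg] using tendsto_atTop_add_const_right _ (-K) hsnd
  have hD : Tendsto (fun p : ℝ × ℝ => C * (p.1 - L) ^ α * (p.2 - K) ^ β)
      (atTop ×ˢ atTop) atTop :=
    (hA.const_mul_atTop hC).atTop_mul_atTop₀ hB
  have hratio : Tendsto
      (fun p : ℝ × ℝ =>
        C * (p.1 - L) ^ α * (p.2 - K) ^ β /
          (C * (p.1 - L) ^ α * (p.2 - K) ^ β + L ^ α * K ^ β))
      (atTop ×ˢ atTop) (nhds 1) :=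
    (aux_div_add (L ^ α * K ^ β)).comp hD
  have := ((tendsto_const_nhds (x := α)).mul hfrac).mul hratio
  simpa using this
end

section
/- Let b₁, b₃ > 0 with b₁ ≠ b₃, let N_L, N_Y > 0, L₀ ∈ (0, N_L), Y₀ ∈ (0, N_Y), and define s_L(t) = (b₃/b₁)·((N_Y − Y₀)·e^{(b₁ − b₃)t}/(N_L − L₀))·((L₀ + (N_L − L₀)e^{−b₁ t})/(Y₀ + (N_Y − Y₀)e^{−b₃ t})). Then the function t ↦ s_L(t) is not constant on ℝ. Hence, in the logistic growth model the wage share is not time-invariant, and Bowley's law fails. -/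
open Real Filter

lemma exp_neg_mul_tendsto {a : ℝ} (ha : 0 < a) :
    Tendsto (fun t : ℝ => Real.exp (-a * t)) atTop (nhds 0) := by
  have h1 : Tendsto (fun t : ℝ => a * t) atTop atTop :=
    Tendsto.const_mul_atTop ha tendsto_id
  have h2 := Real.tendsto_exp_neg_atTop_nhds_zero.comp h1
  exact h2.congr (fun t => by simp [Function.comp, neg_mul])

/-- In the logistic growth model with distinct growth rates `b₁ ≠ b₃` for labor
and production, the wage share
`s_L(t) = (b₃/b₁)·((N_Y − Y₀)e^{(b₁−b₃)t}/(N_L − L₀))·((L₀ + (N_L − L₀)e^{−b₁t})/(Y₀ + (N_Y − Y₀)e^{−b₃t}))`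
is not constant in time: Bowley's law fails for the logistic model. -/
theorem stmt_19 (b₁ b₃ NL NY L₀ Y₀ : ℝ) (hb₁ : 0 < b₁) (hb₃ : 0 < b₃)
    (hne : b₁ ≠ b₃) (hNL : 0 < NL) (hNY : 0 < NY)
    (hL₀ : L₀ ∈ Set.Ioo 0 NL) (hY₀ : Y₀ ∈ Set.Ioo 0 NY)
    (sL : ℝ → ℝ)
    (hsL : sL = fun t : ℝ =>
      (b₃ / b₁) * ((NY - Y₀) * exp ((b₁ - b₃) * t) / (NL - L₀))
        * ((L₀ + (NL - L₀) * exp (-b₁ * t)) / (Y₀ + (NY - Y₀) * exp (-b₃ * t)))) :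
    ¬ ∃ c : ℝ, ∀ t : ℝ, sL t = c := by
  obtain ⟨hL0, hLN⟩ := hL₀
  obtain ⟨hY0, hYN⟩ := hY₀
  have hA : 0 < NL - L₀ := by linarith
  have hB : 0 < NY - Y₀ := by linarith
  rintro ⟨c, hc⟩
  -- sL 0 = c and sL 0 > 0
  have hc0 : sL 0 = c := hc 0
  have hpos : 0 < sL 0 := by
    rw [hsL]
    have e1 : (0:ℝ) < L₀ + (NL - L₀) * Real.exp (-b₁ * 0) := by positivity
    have e2 : (0:ℝ) < Y₀ + (NY - Y₀) * Real.exp (-b₃ * 0) := by positivity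
    positivity
  have hcpos : 0 < c := hc0 ▸ hpos
  -- limits of numerator and denominator factors
  have hnum : Tendsto (fun t : ℝ => L₀ + (NL - L₀) * Real.exp (-b₁ * t)) atTop (nhds L₀) := by
    have := (exp_neg_mul_tendsto hb₁).const_mul (NL - L₀)
    have h := (tendsto_const_nhds (x := L₀) (f := atTop)).add this
    simpa using h
  have hden : Tendsto (fun t : ℝ => Y₀ + (NY - Y₀) * Real.exp (-b₃ * t)) atTop (nhds Y₀) := by
    have := (exp_neg_mul_tendsto hb₃).const_mul (NY - Y₀)
    have h := (tendsto_const_nhds (x := Y₀) (f := atTop)).add this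
    simpa using h
  have hratio : Tendsto (fun t : ℝ =>
      (L₀ + (NL - L₀) * Real.exp (-b₁ * t)) / (Y₀ + (NY - Y₀) * Real.exp (-b₃ * t)))
      atTop (nhds (L₀ / Y₀)) := hnum.div hden (ne_of_gt hY0)
  rcases lt_or_gt_of_ne hne with hlt | hgt
  · -- b₁ < b₃ : sL → 0, but sL = c > 0
    have hexp : Tendsto (fun t : ℝ => Real.exp ((b₁ - b₃) * t)) atTop (nhds 0) := by
      have := exp_neg_mul_tendsto (a := b₃ - b₁) (by linarith)
      simpa [show ∀ t : ℝ, -(b₃ - b₁) * t = (b₁ - b₃) * t by intro t; ring] using this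
    have hfac : Tendsto (fun t : ℝ =>
        (b₃ / b₁) * ((NY - Y₀) * Real.exp ((b₁ - b₃) * t) / (NL - L₀)))
        atTop (nhds 0) := by
      have := ((hexp.const_mul (NY - Y₀)).div_const (NL - L₀)).const_mul (b₃ / b₁)
      simpa using this
    have hlim : Tendsto sL atTop (nhds 0) := by
      rw [hsL]
      have := hfac.mul hratio
      simpa using this
    have hconst : Tendsto sL atTop (nhds c) := by
      have : sL = fun _ : ℝ => c := funext hc
      rw [this]; exact tendsto_const_nhds
    have : c = 0 := tendsto_nhds_unique hconst hlim
    linarith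
  · -- b₁ > b₃ : sL → atTop, but sL = c constant
    have hexp : Tendsto (fun t : ℝ => Real.exp ((b₁ - b₃) * t)) atTop atTop :=
      Real.tendsto_exp_atTop.comp (Tendsto.const_mul_atTop (by linarith) tendsto_id)
    have hfac : Tendsto (fun t : ℝ =>
        (b₃ / b₁) * ((NY - Y₀) * Real.exp ((b₁ - b₃) * t) / (NL - L₀)))
        atTop atTop := by
      refine Tendsto.const_mul_atTop (by positivity) ?_
      exact ((hexp.const_mul_atTop hB).atTop_div_const hA)
    have hlim : Tendsto sL atTop atTop := by
      rw [hsL]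
      exact hfac.atTop_mul_pos (by positivity) hratio
    have : ∀ᶠ t : ℝ in atTop, c + 1 ≤ sL t := hlim.eventually_ge_atTop (c + 1)
    obtain ⟨t, ht⟩ := this.exists
    rw [hc t] at ht
    linarith
end
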